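/- Let R be a commutative ℂ-algebra, let f, φ₁, …, φ_k ∈ R and set I = (φ₁,…,φ_k). Let Der(R) be the R-module of ℂ-linear derivations of R, let N ⊆ R^{k+1} be the image of the R-linear map Der(R) → R^{k+1} given by δ ↦ (δ(f), δ(φ₁), …, δ(φ_k)), and assume that φ₁, …, φ_k is a regular sequence on R^{k+1}/N. Set Θ := {ξ ∈ Der(R) : ξ(φᵢ) ∈ I for all i} and Θ^T := {η ∈ Der(R) : η(φ₁) = ⋯ = η(φ_k) = 0} + I·Der(R) (so Θ^T ⊆ Θ). Then the evaluation map ξ ↦ ξ(f) induces an isomorphism of R-modules Θ/Θ^T ≅ E(Θ)/E(Θ^T), where E(Θ) = {ξ(f) : ξ ∈ Θ} and E(Θ^T) = {ξ(f) : ξ ∈ Θ^T} are the corresponding R-submodules of R. -/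

import Mathlib

/-- Evaluation of a `ℂ`-linear derivation of `R` at an element `x : R`,
as an `R`-linear map `Der(R) → R`. -/
def derEval (R : Type) [CommRing R] [Algebra ℂ R] (x : R) :
    Derivation ℂ R R →ₗ[R] R where
  toFun δ := δ x
  map_add' _ _ := rfl
  map_smul' _ _ := rfl

/-!
Evaluation at `f` maps `Θ` onto `E(Θ)` and `Θᵀ` onto `E(Θᵀ)`, so the only point is that
`Θ ∩ ker(ξ ↦ ξ f) ⊆ Θᵀ`. Let `Φ : Der(R) → R^{k+1}`, `δ ↦ (δ f, δ φ₁, …, δ φ_k)`, with image `N`.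
For `ζ ∈ Θ` with `ζ f = 0` we have `Φ ζ ∈ N ∩ I·R^{k+1}`. Regularity of `φ` on `R^{k+1}/N`
gives `N ∩ I·R^{k+1} = I·N`, adding one element at a time: if `r` is regular on
`(M/N)/I(M/N)` and `N ∩ IM = IN`, then `N ∩ (I + (r))M = (I + (r))N`. Hence `Φ ζ = Φ η` for
some `η ∈ I·Der(R)`, and `ζ - η` annihilates every `φᵢ`.
-/

open RingTheory.Sequence Submodule

section RegularSequence

variable {R M D : Type*} [CommRing R] [AddCommGroup M] [Module R M] [AddCommGroup D]
  [Module R D]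

lemma mem_sup_smul_top_of_smul_mem {N : Submodule R M} {I : Ideal R} {r : R}
    (hr : IsSMulRegular ((M ⧸ N) ⧸ (I • ⊤ : Submodule R (M ⧸ N))) r) {m : M}
    (hm : r • m ∈ N ⊔ I • ⊤) : m ∈ N ⊔ I • ⊤ := by
  have hmem : ∀ x : M, x ∈ N ⊔ I • ⊤ ↔
      Submodule.Quotient.mk (p := (I • ⊤ : Submodule R (M ⧸ N))) (N.mkQ x) = 0 := by
    intro x
    rw [Submodule.Quotient.mk_eq_zero, ← comap_map_mkQ, mem_comap, map_smul'', Submodule.map_top,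
      range_mkQ]
  rw [hmem] at hm ⊢
  rw [LinearMap.map_smul, Quotient.mk_smul] at hm
  exact hr.right_eq_zero_of_smul hm

lemma inf_sup_span_singleton_smul_top_le {N : Submodule R M} {I : Ideal R} {r : R}
    (hI : N ⊓ I • ⊤ ≤ I • N)
    (hr : IsSMulRegular ((M ⧸ N) ⧸ (I • ⊤ : Submodule R (M ⧸ N))) r) :
    N ⊓ (I ⊔ Ideal.span {r}) • ⊤ ≤ (I ⊔ Ideal.span {r}) • N := by
  rintro x ⟨hxN, hx⟩
  rw [sup_smul, ideal_span_singleton_smul] at hx ⊢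
  obtain ⟨y, hy, t, ht, rfl⟩ := mem_sup.mp hx
  obtain ⟨m, -, rfl⟩ := mem_smul_pointwise_iff_exists _ _ _ |>.mp ht
  have hrm : r • m ∈ N ⊔ I • ⊤ := by
    rw [show r • m = (y + r • m) - y by abel]
    exact sub_mem (mem_sup_left hxN) (mem_sup_right hy)
  obtain ⟨n, hn, z, hz, rfl⟩ := mem_sup.mp (mem_sup_smul_top_of_smul_mem hr hrm)
  have hyz : y + r • z ∈ I • N := by
    refine hI ⟨?_, add_mem hy ((I • ⊤ : Submodule R M).smul_mem r hz)⟩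
    rw [show y + r • z = (y + r • (n + z)) - r • n by rw [smul_add]; abel]
    exact sub_mem hxN (N.smul_mem r hn)
  rw [smul_add, add_comm (r • n), ← add_assoc]
  exact add_mem_sup hyz (smul_mem_pointwise_smul n r N hn)

theorem RingTheory.Sequence.IsWeaklyRegular.inf_smul_top_le {N : Submodule R M} {rs : List R}
    (h : IsWeaklyRegular (M ⧸ N) rs) : N ⊓ Ideal.ofList rs • ⊤ ≤ Ideal.ofList rs • N := by
  induction rs using List.reverseRecOn with
  | nil => simp
  | append_singleton rs r ih =>
    rw [isWeaklyRegular_append_iff, isWeaklyRegular_singleton_iff] at h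
    rw [Ideal.ofList_append, Ideal.ofList_singleton]
    exact inf_sup_span_singleton_smul_top_le (ih h.1) h.2

theorem RingTheory.Sequence.IsWeaklyRegular.comap_smul_top_le_ker_sup {Φ : D →ₗ[R] M}
    {rs : List R} (h : IsWeaklyRegular (M ⧸ LinearMap.range Φ) rs) :
    (Ideal.ofList rs • ⊤ : Submodule R M).comap Φ ≤ LinearMap.ker Φ ⊔ Ideal.ofList rs • ⊤ := by
  intro ζ hζ
  have hΦζ : Φ ζ ∈ (Ideal.ofList rs • ⊤ : Submodule R D).map Φ := by
    rw [map_smul'', Submodule.map_top]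
    exact h.inf_smul_top_le ⟨LinearMap.mem_range_self Φ ζ, hζ⟩
  obtain ⟨η, hη, hηζ⟩ := hΦζ
  rw [show ζ = (ζ - η) + η by abel]
  exact add_mem_sup (by rw [LinearMap.mem_ker, map_sub, hηζ, sub_self]) hη

end RegularSequence

lemma Submodule.mem_ideal_smul_top_pi {R ι : Type*} [CommRing R] [Fintype ι] {I : Ideal R}
    {x : ι → R} (hx : ∀ i, x i ∈ I) : x ∈ I • (⊤ : Submodule R (ι → R)) := by
  classical
  rw [pi_eq_sum_univ x]
  exact sum_mem fun i _ => smul_mem_smul (hx i) mem_top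

lemma Ideal.ofList_ofFn {R : Type*} [CommRing R] {k : ℕ} (φ : Fin k → R) :
    Ideal.ofList (List.ofFn φ) = Ideal.span (Set.range φ) := by
  simp only [Ideal.ofList, List.mem_ofFn']
  rfl

lemma Submodule.exists_quotient_equiv_map_quotient {R M M₂ : Type*} [CommRing R]
    [AddCommGroup M] [Module R M] [AddCommGroup M₂] [Module R M₂] (g : M →ₗ[R] M₂)
    {A B : Submodule R M} (hBA : B ≤ A) (hker : A ⊓ LinearMap.ker g ≤ B) :
    ∃ e : (A ⧸ B.comap A.subtype) ≃ₗ[R] (A.map g ⧸ (B.map g).comap (A.map g).subtype),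
      ∀ ξ : A, e (Quotient.mk ξ) = Quotient.mk ⟨g ξ, mem_map_of_mem ξ.2⟩ := by
  set g' := ((B.map g).comap (A.map g).subtype).mkQ ∘ₗ g.submoduleMap A
  have hker' : B.comap A.subtype = LinearMap.ker g' := by
    ext ξ
    simp only [mem_comap, subtype_apply, LinearMap.mem_ker, g', LinearMap.comp_apply, mkQ_apply,
      Quotient.mk_eq_zero, LinearMap.submoduleMap_coe_apply]
    refine ⟨mem_map_of_mem, fun ⟨b, hb, hbξ⟩ => ?_⟩
    rw [show (ξ : M) = (ξ - b) + b by abel]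
    refine add_mem (hker (mem_inf.mpr ⟨sub_mem ξ.2 (hBA hb), ?_⟩)) hb
    rw [LinearMap.mem_ker, map_sub, hbξ, sub_self]
  have hsurj : Function.Surjective g' :=
    (mkQ_surjective _).comp (LinearMap.submoduleMap_surjective g A)
  exact ⟨(quotEquivOfEq _ _ hker').trans (g'.quotKerEquivOfSurjective hsurj), fun _ => rfl⟩

section LogarithmicDerivations

variable {R : Type} [CommRing R] [Algebra ℂ R]

lemma iInf_ker_derEval_sup_smul_top_le {ι : Type*} (φ : ι → R) (I : Ideal R) :
    (⨅ i, LinearMap.ker (derEval R (φ i))) ⊔ I • (⊤ : Submodule R (Derivation ℂ R R)) ≤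
      ⨅ i, (I.restrictScalars R).comap (derEval R (φ i)) := by
  refine sup_le (iInf_mono fun i δ hδ => ?_) (le_iInf fun i => smul_le.mpr fun a ha δ _ => ?_)
  · rw [LinearMap.mem_ker] at hδ
    simp [hδ]
  · exact I.mul_mem_right _ ha

lemma iInf_comap_derEval_inf_ker_le {k : ℕ} (f : R) (φ : Fin k → R)
    (hreg : IsWeaklyRegular ((Fin (k + 1) → R) ⧸ LinearMap.range
      (LinearMap.pi fun i => derEval R ((Fin.cons f φ : Fin (k + 1) → R) i))) (List.ofFn φ)) :
    (⨅ i, ((Ideal.span (Set.range φ)).restrictScalars R).comap (derEval R (φ i))) ⊓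
        LinearMap.ker (derEval R f) ≤
      (⨅ i, LinearMap.ker (derEval R (φ i))) ⊔ Ideal.span (Set.range φ) • ⊤ := by
  set Φ := LinearMap.pi fun i => derEval R ((Fin.cons f φ : Fin (k + 1) → R) i)
  have hker : LinearMap.ker Φ ≤ ⨅ i, LinearMap.ker (derEval R (φ i)) :=
    le_iInf fun i δ hδ => congrFun hδ i.succ
  rintro ζ ⟨hφ, hf⟩
  have hΦζ : Φ ζ ∈ Ideal.ofList (List.ofFn φ) • (⊤ : Submodule R (Fin (k + 1) → R)) := by
    refine mem_ideal_smul_top_pi fun j => ?_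
    rw [Ideal.ofList_ofFn]
    cases j using Fin.cases with
    | zero => exact (show Φ ζ 0 = 0 from LinearMap.mem_ker.mp hf) ▸ zero_mem _
    | succ i => exact mem_iInf _ |>.mp hφ i
  have hζ := hreg.comap_smul_top_le_ker_sup hΦζ
  rw [Ideal.ofList_ofFn] at hζ
  exact sup_le_sup_right hker _ hζ

end LogarithmicDerivations

/-- **Theorem (evaluation induces an isomorphism `Θ/Θᵀ ≅ df(Θ)/df(Θᵀ)`).**
Let `R` be a commutative `ℂ`-algebra, `f, φ₁, …, φ_k ∈ R`, `I = (φ₁,…,φ_k)`,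
and let `N ⊆ R^{k+1}` be the image of `Der(R) → R^{k+1}`,
`δ ↦ (δ f, δ φ₁, …, δ φ_k)`; assume `φ₁, …, φ_k` is a regular sequence on
`R^{k+1}/N`. With `Θ = {ξ : ξ φᵢ ∈ I ∀ i}` and
`Θᵀ = {η : η φ₁ = ⋯ = η φ_k = 0} + I·Der(R)`, the evaluation `ξ ↦ ξ f`
induces an `R`-module isomorphism `Θ/Θᵀ ≅ E(Θ)/E(Θᵀ)`. -/
theorem evaluation_induces_iso_theta_mod_trivial
    (R : Type) [CommRing R] [Algebra ℂ R] (k : ℕ) (f : R) (φ : Fin k → R)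
    (I : Ideal R) (hI : I = Ideal.span (Set.range φ))
    (N : Submodule R (Fin (k + 1) → R))
    (hN : N = LinearMap.range
      (LinearMap.pi fun i => derEval R ((Fin.cons f φ : Fin (k + 1) → R) i)))
    (hreg : RingTheory.Sequence.IsRegular ((Fin (k + 1) → R) ⧸ N) (List.ofFn φ))
    (Θ ΘT : Submodule R (Derivation ℂ R R))
    (hΘ : Θ = ⨅ i, Submodule.comap (derEval R (φ i)) (Submodule.restrictScalars R I))
    (hΘT : ΘT = (⨅ i, LinearMap.ker (derEval R (φ i))) ⊔
      I • (⊤ : Submodule R (Derivation ℂ R R))) :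
    ∃ e : (Θ ⧸ ΘT.comap Θ.subtype) ≃ₗ[R]
        (Θ.map (derEval R f) ⧸ (ΘT.map (derEval R f)).comap (Θ.map (derEval R f)).subtype),
      ∀ ξ : Θ,
        e (Submodule.Quotient.mk ξ) =
          Submodule.Quotient.mk
            (⟨derEval R f ξ.1, Submodule.mem_map_of_mem ξ.2⟩ : Θ.map (derEval R f)) := by
  subst hI hN hΘ hΘT
  exact exists_quotient_equiv_map_quotient (derEval R f)
    (iInf_ker_derEval_sup_smul_top_le φ _)
    (iInf_comap_derEval_inf_ker_le f φ hreg.toIsWeaklyRegular)
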